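/- Let $d \geq 2$, let $\nu = (p_1/q, \ldots, p_d/q)^T$ with positive integers $p_i < q$ and $\gcd(p_1,\ldots,p_d,q)=1$, and let $L_\nu = \mathbb{Z}^d + \mathbb{Z}\nu$ with covering radius $\tau = \tau(L_\nu)$. If $\tau < 1/2$, then there exists an integer $t$ with $1 \leq t \leq q-1$ such that the point $\xi = t\nu \bmod 1$ lies in the ball $B^d(c(\tau), \tau)$, where $c(\tau) = (\tau, \ldots, \tau, 1 - \tau)$; in particular $r(\xi) \leq r(d, \tau)$. -/

import Mathlib

/-- The set `L_ν = ℤ^d + ℤν`. -/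
def latticeNu (d : ℕ) (ν : EuclideanSpace ℝ (Fin d)) : Set (EuclideanSpace ℝ (Fin d)) :=
  {x | ∃ (z : Fin d → ℤ) (t : ℤ), ∀ i, x i = (z i : ℝ) + (t : ℝ) * ν i}

/-- The covering radius of a subset `L ⊆ ℝ^d` (Euclidean norm). -/
noncomputable def covRad (d : ℕ) (L : Set (EuclideanSpace ℝ (Fin d))) : ℝ :=
  sInf {σ : ℝ | 0 < σ ∧ ∀ x : EuclideanSpace ℝ (Fin d), ∃ y ∈ L, dist x y ≤ σ}

/-- Euclidean norm of the first `d-1` coordinates of `x ∈ ℝ^d`. -/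
noncomputable def projNorm (d : ℕ) (x : EuclideanSpace ℝ (Fin d)) : ℝ :=
  Real.sqrt (∑ i ∈ Finset.univ.filter (fun i : Fin d => (i : ℕ) < d - 1), (x i) ^ 2)

/-- The ratio `r(x) = ‖(x_1,…,x_{d-1})‖ / x_d`. -/
noncomputable def ratioFn (d : ℕ) (hd : 0 < d) (x : EuclideanSpace ℝ (Fin d)) : ℝ :=
  projNorm d x / x ⟨d - 1, Nat.sub_lt hd one_pos⟩

/-- The center `c(R) = (R,…,R,1-R)`. -/
noncomputable def centerR (d : ℕ) (R : ℝ) : EuclideanSpace ℝ (Fin d) :=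
  WithLp.toLp 2 (fun i => if (i : ℕ) = d - 1 then 1 - R else R)

/-- The quantity `a(d,R)`. -/
noncomputable def aDR (d : ℕ) (R : ℝ) : ℝ :=
  ((1 - R) * Real.sqrt (((d : ℝ) - 1) * R ^ 2 - 2 * R + 1) - Real.sqrt ((d : ℝ) - 1) * R ^ 2) /
    ((d : ℝ) * R ^ 2 - 2 * R + 1)

/-- The quantity `r(d,R) = (a(d,R)⁻² - 1)^{1/2}`. -/
noncomputable def rDR (d : ℕ) (R : ℝ) : ℝ :=
  Real.sqrt ((aDR d R) ⁻¹ ^ 2 - 1)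

/-! By local finiteness of `L_ν ⊆ q⁻¹ℤ^d` the infimum defining `τ` is attained: some lattice
point lies in `B(c(τ), τ)`, and moving the centre slightly away from the top point
`c(τ) + τ e_d` of the ball shows that it can be taken different from that point. Every other
point of the closed ball lies in `[0,1)^d` with positive last coordinate (as `τ < 1/2`), so it is
`tν mod 1` for some `0 < t < q`.

The bound on `r(ξ)` is Lemma 1 of the paper: `r(d, R)` is the slope of the cone
`‖x'‖ ≤ r x_d` tangent to `B(c(R), R)`, and containment of the ball in that cone reduces to the
Cauchy–Schwarz inequality in the plane of `(‖x' - c'‖, x_d - c_d)`. -/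

open Metric RealInnerProductSpace

section TangentCone

variable {d : ℕ} {R : ℝ}

lemma sq_sqrt_discriminant (hd : 1 ≤ d) (hR : R < 1 / 2) :
    √(((d : ℝ) - 1) * R ^ 2 - 2 * R + 1) ^ 2 = ((d : ℝ) - 1) * R ^ 2 - 2 * R + 1 := by
  have hn : (0 : ℝ) ≤ (d : ℝ) - 1 := by rw [sub_nonneg]; exact_mod_cast hd
  exact Real.sq_sqrt (by nlinarith [sq_nonneg R])

lemma inv_aDR_eq (hd : 1 ≤ d) (hR : R < 1 / 2) :
    (aDR d R)⁻¹ = ((1 - R) * √(((d : ℝ) - 1) * R ^ 2 - 2 * R + 1) + √((d : ℝ) - 1) * R ^ 2) /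
      (1 - 2 * R) := by
  have hQ := sq_sqrt_discriminant hd hR
  have hsn : √((d : ℝ) - 1) ^ 2 = (d : ℝ) - 1 :=
    Real.sq_sqrt (by rw [sub_nonneg]; exact_mod_cast hd)
  set Q := √(((d : ℝ) - 1) * R ^ 2 - 2 * R + 1)
  set s := √((d : ℝ) - 1)
  have hu : (0 : ℝ) < 1 - 2 * R := by linarith
  have hD : (0 : ℝ) < d * R ^ 2 - 2 * R + 1 := by nlinarith [sq_nonneg R]
  have hfac : ((1 - R) * Q - s * R ^ 2) * ((1 - R) * Q + s * R ^ 2) =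
      (1 - 2 * R) * (d * R ^ 2 - 2 * R + 1) := by
    linear_combination (1 - R) ^ 2 * hQ - R ^ 4 * hsn
  have hnum : (1 - R) * Q - s * R ^ 2 ≠ 0 := by
    intro h
    rw [h, zero_mul] at hfac
    nlinarith
  rw [aDR, inv_div, div_eq_div_iff hnum hu.ne']
  linear_combination -hfac

lemma rDR_eq (hd : 1 ≤ d) (hR0 : 0 ≤ R) (hR : R < 1 / 2) :
    rDR d R = R * (√((d : ℝ) - 1) * (1 - R) + √(((d : ℝ) - 1) * R ^ 2 - 2 * R + 1)) /
      (1 - 2 * R) := by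
  have hQ := sq_sqrt_discriminant hd hR
  have hsn : √((d : ℝ) - 1) ^ 2 = (d : ℝ) - 1 :=
    Real.sq_sqrt (by rw [sub_nonneg]; exact_mod_cast hd)
  rw [rDR, inv_aDR_eq hd hR]
  set Q := √(((d : ℝ) - 1) * R ^ 2 - 2 * R + 1)
  set s := √((d : ℝ) - 1)
  have hu : (0 : ℝ) < 1 - 2 * R := by linarith
  have hR1 : 0 ≤ 1 - R := by linarith
  rw [← Real.sqrt_sq (by positivity : 0 ≤ R * (s * (1 - R) + Q) / (1 - 2 * R))]
  congr 1
  rw [div_pow, div_pow, div_sub_one (pow_ne_zero 2 hu.ne'), div_left_inj' (pow_ne_zero 2 hu.ne')]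
  linear_combination (1 - 2 * R) * hQ - R ^ 2 * (1 - 2 * R) * hsn

/-- `r(d,R)` is the slope of the cone with axis `e_d` tangent to the ball `B(c(R), R)`. -/
lemma rDR_tangent (hd : 1 ≤ d) (hR0 : 0 ≤ R) (hR : R < 1 / 2) :
    R * √(1 + rDR d R ^ 2) + R * √((d : ℝ) - 1) = rDR d R * (1 - R) := by
  have hQ := sq_sqrt_discriminant hd hR
  have hsn : √((d : ℝ) - 1) ^ 2 = (d : ℝ) - 1 :=
    Real.sq_sqrt (by rw [sub_nonneg]; exact_mod_cast hd)
  rw [rDR_eq hd hR0 hR]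
  set Q := √(((d : ℝ) - 1) * R ^ 2 - 2 * R + 1)
  set s := √((d : ℝ) - 1)
  have hu : (0 : ℝ) < 1 - 2 * R := by linarith
  have hR1 : 0 ≤ 1 - R := by linarith
  have hsec : √(1 + (R * (s * (1 - R) + Q) / (1 - 2 * R)) ^ 2) =
      ((1 - R) * Q + s * R ^ 2) / (1 - 2 * R) := by
    rw [← Real.sqrt_sq (by positivity : 0 ≤ ((1 - R) * Q + s * R ^ 2) / (1 - 2 * R))]
    congr 1
    rw [div_pow, div_pow, one_add_div (pow_ne_zero 2 hu.ne'), div_left_inj' (pow_ne_zero 2 hu.ne')]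
    linear_combination -(1 - 2 * R) * hQ + R ^ 2 * (1 - 2 * R) * hsn
  rw [hsec, mul_div_assoc', div_add' _ _ _ hu.ne', div_mul_eq_mul_div, div_left_inj' hu.ne']
  ring

end TangentCone

section ConeBound

variable {E : Type*} [NormedAddCommGroup E] [InnerProductSpace ℝ E]

lemma sq_norm_sub_inner_smul_add_sq_inner {e : E} (he : ‖e‖ = 1) (y : E) :
    ‖y - ⟪y, e⟫ • e‖ ^ 2 + ⟪y, e⟫ ^ 2 = ‖y‖ ^ 2 := by
  rw [norm_sub_sq_real, inner_smul_right, norm_smul, he, Real.norm_eq_abs, mul_one, sq_abs]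
  ring

lemma norm_sub_inner_smul_le_of_mem_closedBall {e c x : E} {R r : ℝ} (he : ‖e‖ = 1)
    (hc : R * √(1 + r ^ 2) + ‖c - ⟪c, e⟫ • e‖ ≤ r * ⟪c, e⟫) (hx : x ∈ closedBall c R) :
    ‖x - ⟪x, e⟫ • e‖ ≤ r * ⟪x, e⟫ := by
  set y := x - c
  set s := ‖y - ⟪y, e⟫ • e‖
  set w := ⟪y, e⟫
  have hy : ‖y‖ ≤ R := by rwa [mem_closedBall, dist_eq_norm] at hx
  have hpyth : s ^ 2 + w ^ 2 = ‖y‖ ^ 2 := sq_norm_sub_inner_smul_add_sq_inner he y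
  have hsplit : x - ⟪x, e⟫ • e = (c - ⟪c, e⟫ • e) + (y - w • e) := by
    simp only [y, w, inner_sub_left, sub_smul]
    abel
  -- Cauchy–Schwarz for `(1, -r)` and `(s, w)`
  have hcs : s - r * w ≤ √(1 + r ^ 2) * ‖y‖ := by
    rw [← Real.sqrt_sq (norm_nonneg y), ← Real.sqrt_mul (by positivity)]
    refine (le_abs_self _).trans (Real.abs_le_sqrt ?_)
    rw [← hpyth]
    nlinarith [sq_nonneg (r * s + w)]
  have hxe : ⟪x, e⟫ = ⟪c, e⟫ + w := by simp only [w, y, inner_sub_left]; ring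
  calc ‖x - ⟪x, e⟫ • e‖ ≤ ‖c - ⟪c, e⟫ • e‖ + s := hsplit ▸ norm_add_le _ _
    _ ≤ ‖c - ⟪c, e⟫ • e‖ + r * w + √(1 + r ^ 2) * R := by
        nlinarith [mul_le_mul_of_nonneg_left hy (Real.sqrt_nonneg (1 + r ^ 2))]
    _ ≤ r * ⟪x, e⟫ := by rw [hxe]; nlinarith

end ConeBound

section Coordinates

variable {d : ℕ}

def lastIdx (d : ℕ) (hd : 0 < d) : Fin d := ⟨d - 1, Nat.sub_lt hd one_pos⟩

lemma lastIdx_ne_iff {hd : 0 < d} {i : Fin d} : i ≠ lastIdx d hd ↔ (i : ℕ) ≠ d - 1 := by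
  simp [lastIdx, Fin.ext_iff]

lemma centerR_lastIdx (hd : 0 < d) (R : ℝ) : centerR d R (lastIdx d hd) = 1 - R := by
  simp [centerR, lastIdx]

lemma centerR_of_ne_lastIdx {hd : 0 < d} {i : Fin d} (hi : i ≠ lastIdx d hd) (R : ℝ) :
    centerR d R i = R := by
  simp [centerR, lastIdx_ne_iff.mp hi]

lemma projNorm_eq_norm (hd : 0 < d) (x : EuclideanSpace ℝ (Fin d)) :
    projNorm d x = ‖x - x (lastIdx d hd) • EuclideanSpace.single (lastIdx d hd) 1‖ := by
  rw [projNorm, EuclideanSpace.norm_eq, Finset.sum_filter]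
  congr 1
  refine Finset.sum_congr rfl fun i _ => ?_
  by_cases hi : i = lastIdx d hd
  · subst hi; simp [lastIdx]
  · have : (i : ℕ) < d - 1 := by have := lastIdx_ne_iff.mp hi; omega
    simp [hi, this]

lemma norm_centerR_sub_smul_single (hd : 0 < d) {R : ℝ} (hR : 0 ≤ R) :
    ‖centerR d R - (1 - R) • EuclideanSpace.single (lastIdx d hd) (1 : ℝ)‖ =
      R * √((d : ℝ) - 1) := by
  have hcoord : ∀ i,
      ‖(centerR d R - (1 - R) • EuclideanSpace.single (lastIdx d hd) (1 : ℝ)) i‖ ^ 2 =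
        R ^ 2 - if i = lastIdx d hd then R ^ 2 else 0 := by
    intro i
    by_cases hi : i = lastIdx d hd
    · subst hi; simp [centerR_lastIdx]
    · simp [hi, centerR_of_ne_lastIdx hi]
  rw [EuclideanSpace.norm_eq, Finset.sum_congr rfl fun i _ => hcoord i, Finset.sum_sub_distrib,
    Finset.sum_ite_eq', if_pos (Finset.mem_univ _), Finset.sum_const, Finset.card_univ,
    Fintype.card_fin, nsmul_eq_mul, ← sub_one_mul, Real.sqrt_mul' _ (sq_nonneg R),
    Real.sqrt_sq hR, mul_comm]

lemma pos_lastIdx_of_mem_closedBall (hd : 0 < d) {R : ℝ} (hR : R < 1 / 2)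
    {x : EuclideanSpace ℝ (Fin d)} (hx : x ∈ closedBall (centerR d R) R) :
    0 < x (lastIdx d hd) := by
  have h := (PiLp.dist_apply_le x (centerR d R) (lastIdx d hd)).trans (mem_closedBall.mp hx)
  rw [centerR_lastIdx, Real.dist_eq, abs_le] at h
  linarith [h.1]

lemma ratioFn_le_rDR (hd : 0 < d) {R : ℝ} (hR0 : 0 ≤ R) (hR : R < 1 / 2)
    {x : EuclideanSpace ℝ (Fin d)} (hx : x ∈ closedBall (centerR d R) R) :
    ratioFn d hd x ≤ rDR d R := by
  set e := EuclideanSpace.single (lastIdx d hd) (1 : ℝ)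
  have hinner : ∀ z, ⟪z, e⟫ = z (lastIdx d hd) := fun z => by
    simp [e, EuclideanSpace.inner_single_right]
  have hc : R * √(1 + rDR d R ^ 2) + ‖centerR d R - ⟪centerR d R, e⟫ • e‖ ≤
      rDR d R * ⟪centerR d R, e⟫ := by
    rw [hinner, centerR_lastIdx, norm_centerR_sub_smul_single hd hR0, rDR_tangent hd hR0 hR]
  have hcone := norm_sub_inner_smul_le_of_mem_closedBall (by simp [e]) hc hx
  rw [hinner] at hcone
  rw [ratioFn, projNorm_eq_norm hd]
  exact (div_le_iff₀ (pos_lastIdx_of_mem_closedBall hd hR hx)).mpr hcone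

end Coordinates

section CoveringRadius

variable {d : ℕ} {L : Set (EuclideanSpace ℝ (Fin d))}

lemma covRad_nonneg : 0 ≤ covRad d L :=
  Real.sInf_nonneg fun _ hσ => hσ.1.le

lemma dist_round_le (x : EuclideanSpace ℝ (Fin d)) :
    dist x (WithLp.toLp 2 fun i => (round (x i) : ℝ)) ≤ √d := by
  rw [EuclideanSpace.dist_eq]
  refine Real.sqrt_le_sqrt ?_
  calc ∑ i, dist (x i) (round (x i) : ℝ) ^ 2 ≤ ∑ _i : Fin d, (1 : ℝ) := by
        refine Finset.sum_le_sum fun i _ => ?_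
        have h := abs_sub_round (x i)
        rw [Real.dist_eq]
        nlinarith [abs_nonneg (x i - round (x i))]
    _ = d := by simp

lemma exists_dist_le_of_covRad_lt
    (hL : ∀ z : Fin d → ℤ, (WithLp.toLp 2 fun i => (z i : ℝ)) ∈ L) {σ : ℝ}
    (hσ : covRad d L < σ) (x : EuclideanSpace ℝ (Fin d)) : ∃ y ∈ L, dist x y ≤ σ := by
  have hne : {σ : ℝ | 0 < σ ∧ ∀ x : EuclideanSpace ℝ (Fin d), ∃ y ∈ L, dist x y ≤ σ}.Nonempty :=
    ⟨√d + 1, by positivity, fun x =>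
      ⟨_, hL fun i => round (x i), (dist_round_le x).trans (le_add_of_nonneg_right zero_le_one)⟩⟩
  obtain ⟨b, ⟨-, hb⟩, hbσ⟩ := (csInf_lt_iff ⟨0, fun _ h => h.1.le⟩ hne).mp hσ
  obtain ⟨y, hyL, hy⟩ := hb x
  exact ⟨y, hyL, hy.trans hbσ.le⟩

end CoveringRadius

lemma exists_mem_closedBall_ne_add_smul {E : Type*} [NormedAddCommGroup E] [NormedSpace ℝ E]
    {L : Set E} {τ : ℝ} (hcov : ∀ σ, τ < σ → ∀ x, ∃ y ∈ L, dist x y ≤ σ)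
    (hfin : ∀ x r, (L ∩ closedBall x r).Finite) (c : E) {v : E} (hv : ‖v‖ = 1) :
    ∃ y ∈ L, y ∈ closedBall c τ ∧ y ≠ c + τ • v := by
  set S := (L ∩ closedBall c (τ + 1)) \ {c + τ • v}
  have hnear : ∀ ε, 0 < ε → ε ≤ 1 → ∃ y ∈ S, dist y c ≤ τ + ε := by
    intro ε hε hε1
    -- cover the centre moved away from `c + τ • v`, which then lies out of reach
    obtain ⟨y, hyL, hy⟩ := hcov (τ + ε / 4) (by linarith) (c - (ε / 2) • v)
    have hmove : dist (c - (ε / 2) • v) c = ε / 2 := by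
      rw [dist_eq_norm, sub_sub_cancel_left, norm_neg, norm_smul, hv, mul_one, Real.norm_eq_abs,
        abs_of_pos (by positivity)]
    have hyc : dist y c ≤ τ + 3 * ε / 4 := by
      linarith [dist_triangle y (c - (ε / 2) • v) c, dist_comm y (c - (ε / 2) • v)]
    have hne : y ≠ c + τ • v := by
      rintro rfl
      have : dist (c - (ε / 2) • v) (c + τ • v) = |ε / 2 + τ| := by
        rw [dist_eq_norm, show c - (ε / 2) • v - (c + τ • v) = -((ε / 2 + τ) • v) by module,
          norm_neg, norm_smul, hv, mul_one, Real.norm_eq_abs]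
      linarith [le_abs_self (ε / 2 + τ)]
    exact ⟨y, ⟨⟨hyL, mem_closedBall.2 (by linarith)⟩, hne⟩, by linarith⟩
  obtain ⟨y₁, hy₁S, -⟩ := hnear 1 one_pos le_rfl
  obtain ⟨y, hyS, hymin⟩ :=
    Set.exists_min_image S (dist · c) ((hfin c _).subset Set.sdiff_subset) ⟨y₁, hy₁S⟩
  refine ⟨y, hyS.1.1, mem_closedBall.2 (le_of_forall_pos_le_add fun ε hε => ?_), hyS.2⟩
  obtain ⟨y', hy'S, hy'⟩ := hnear (min ε 1) (lt_min hε one_pos) (min_le_right _ _)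
  linarith [hymin y' hy'S, min_le_left ε 1]

lemma inner_sub_lt_of_mem_closedBall_of_ne {E : Type*} [NormedAddCommGroup E]
    [InnerProductSpace ℝ E] {c v x : E} {τ : ℝ} (hv : ‖v‖ = 1) (hx : x ∈ closedBall c τ)
    (hne : x ≠ c + τ • v) : ⟪x - c, v⟫ < τ := by
  have hxc : ‖x - c‖ ≤ τ := by rwa [mem_closedBall, dist_eq_norm] at hx
  have hcs : ⟪x - c, v⟫ ≤ ‖x - c‖ := by simpa [hv] using real_inner_le_norm (x - c) v
  refine lt_of_le_of_ne (hcs.trans hxc) fun heq => hne ?_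
  have hnorm : ‖x - c‖ = τ := le_antisymm hxc (heq ▸ hcs)
  have hcs_eq : ⟪x - c, v⟫ = ‖x - c‖ * ‖v‖ := by rw [heq, hnorm, hv, mul_one]
  have hdir := inner_eq_norm_mul_iff_real.mp hcs_eq
  rw [hv, one_smul, hnorm] at hdir
  rw [← hdir, add_sub_cancel]

section Lattice

variable {d : ℕ}

lemma intPoint_mem_latticeNu (ν : EuclideanSpace ℝ (Fin d)) (z : Fin d → ℤ) :
    (WithLp.toLp 2 fun i => (z i : ℝ)) ∈ latticeNu d ν :=
  ⟨z, 0, fun i => by simp⟩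

lemma finite_latticeNu_inter_closedBall {p : Fin d → ℕ} {q : ℕ} (hq : q ≠ 0)
    {ν : EuclideanSpace ℝ (Fin d)} (hν : ∀ i, ν i = (p i : ℝ) / (q : ℝ))
    (c : EuclideanSpace ℝ (Fin d)) (r : ℝ) : (latticeNu d ν ∩ closedBall c r).Finite := by
  set f := zmultiplesHom ℝ (q : ℝ)⁻¹
  have hf : ∀ K, IsCompact K → (f ⁻¹' K).Finite := tendsto_cofinite_cocompact_iff.mp
    (Int.tendsto_zmultiplesHom_cofinite (inv_ne_zero (Nat.cast_ne_zero.mpr hq)))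
  refine ((Set.Finite.pi fun i => hf _ (isCompact_Icc (a := c i - r) (b := c i + r))).image
    fun m => (WithLp.toLp 2 fun i => f (m i) : EuclideanSpace ℝ (Fin d))).subset ?_
  rintro x ⟨⟨z, t, hx⟩, hxc⟩
  -- `q • x` has integer coordinates
  have hcoord : ∀ i, f (q * z i + t * p i) = x i := fun i => by
    rw [zmultiplesHom_apply, zsmul_eq_mul, hx i, hν i]
    push_cast
    field_simp
  refine ⟨fun i => q * z i + t * p i, fun i _ => ?_, by ext i; exact hcoord i⟩
  have h := (PiLp.dist_apply_le x c i).trans (mem_closedBall.mp hxc)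
  rw [Real.dist_eq, abs_le] at h
  simp only [Set.mem_preimage, hcoord, Set.mem_Icc]
  constructor <;> linarith [h.1, h.2]

lemma exists_lt_fract_mul_eq {p : Fin d → ℕ} {q : ℕ} (hq : 0 < q) {ν : EuclideanSpace ℝ (Fin d)}
    (hν : ∀ i, ν i = (p i : ℝ) / (q : ℝ)) {y : EuclideanSpace ℝ (Fin d)}
    (hy : y ∈ latticeNu d ν) : ∃ t : ℕ, t < q ∧ ∀ i, Int.fract (t * ν i) = Int.fract (y i) := by
  obtain ⟨z, t, hy⟩ := hy
  have hq' : (0 : ℤ) < q := by exact_mod_cast hq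
  have hmod := Int.emod_nonneg t hq'.ne'
  refine ⟨(t % q).toNat, by have := Int.emod_lt_of_pos t hq'; omega, fun i => ?_⟩
  have ht : (((t % q).toNat : ℕ) : ℝ) = t - q * (t / q : ℤ) := by
    rw [← Int.cast_natCast, Int.toNat_of_nonneg hmod, Int.emod_def]
    push_cast
    ring
  rw [hy i, Int.fract_intCast_add, Int.fract_eq_fract]
  exact ⟨-(t / q) * p i, by rw [ht, hν i]; push_cast; field_simp; ring⟩

lemma mem_Ico_of_mem_closedBall_centerR (hd : 0 < d) {τ : ℝ} (hτ : τ < 1 / 2)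
    {y : EuclideanSpace ℝ (Fin d)} (hy : y ∈ closedBall (centerR d τ) τ)
    (hlast : y (lastIdx d hd) < 1) (i : Fin d) : y i ∈ Set.Ico 0 1 := by
  have h := (PiLp.dist_apply_le y (centerR d τ) i).trans (mem_closedBall.mp hy)
  rw [Real.dist_eq, abs_le] at h
  by_cases hi : i = lastIdx d hd
  · subst hi
    rw [centerR_lastIdx] at h
    constructor <;> linarith [h.1]
  · rw [centerR_of_ne_lastIdx hi] at h
    constructor <;> linarith [h.1, h.2]

end Lattice

/-- If `τ(L_ν) < 1/2` then some iterate `tν mod 1` lies in `B(c(τ), τ)`, and in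
particular has ratio at most `r(d,τ)`. -/
theorem exists_iterate_in_ball (d : ℕ) (hd : 2 ≤ d) (p : Fin d → ℕ) (q : ℕ)
    (hq : ∀ i, p i < q)
    (ν : EuclideanSpace ℝ (Fin d)) (hν : ∀ i, ν i = (p i : ℝ) / (q : ℝ))
    (hτ : covRad d (latticeNu d ν) < 1 / 2) :
    ∃ t : ℕ, 1 ≤ t ∧ t ≤ q - 1 ∧
      WithLp.toLp 2 (fun i => Int.fract ((t : ℝ) * ν i)) ∈
        Metric.closedBall (centerR d (covRad d (latticeNu d ν))) (covRad d (latticeNu d ν)) ∧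
      ratioFn d (by omega) (WithLp.toLp 2 (fun i => Int.fract ((t : ℝ) * ν i)))
        ≤ rDR d (covRad d (latticeNu d ν)) := by
  have hd0 : 0 < d := by omega
  have hq0 : 0 < q := (Nat.zero_le _).trans_lt (hq ⟨0, hd0⟩)
  set j := lastIdx d hd0
  obtain ⟨y, hyL, hyc, hne⟩ := exists_mem_closedBall_ne_add_smul
    (fun _ hσ => exists_dist_le_of_covRad_lt (intPoint_mem_latticeNu ν) hσ)
    (finite_latticeNu_inter_closedBall hq0.ne' hν) (centerR d _)
    (by simp : ‖EuclideanSpace.single j (1 : ℝ)‖ = 1)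
  have hlast : y j < 1 := by
    have := inner_sub_lt_of_mem_closedBall_of_ne (by simp) hyc hne
    rw [EuclideanSpace.inner_single_right, PiLp.sub_apply, centerR_lastIdx] at this
    simp only [one_mul, conj_trivial] at this
    linarith
  obtain ⟨t, htq, hfract⟩ := exists_lt_fract_mul_eq hq0 hν hyL
  have hξ : (WithLp.toLp 2 fun i => Int.fract ((t : ℝ) * ν i)) = y := by
    ext i
    rw [PiLp.toLp_apply, hfract,
      Int.fract_eq_self.mpr (mem_Ico_of_mem_closedBall_centerR hd0 hτ hyc hlast i)]
  have ht0 : t ≠ 0 := by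
    rintro rfl
    have h := congrArg (· j) hξ
    simp only [Nat.cast_zero, zero_mul, Int.fract_zero] at h
    linarith [pos_lastIdx_of_mem_closedBall hd0 hτ hyc]
  exact ⟨t, by omega, by omega, hξ ▸ hyc, hξ ▸ ratioFn_le_rDR hd0 covRad_nonneg hτ hyc⟩
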